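/- For all integers i, j with i ≠ 1, the elements x^{iσ,0} and x^{jδ,0} lie in the derived subalgebra B = [A,A]. -/

import Mathlib

namespace SuBlock

variable (F : Type*) [Field F]

def sigmaV : Fin 4 → F := ![1, 0, 1, 0]

def deltaV (d : F) : Fin 4 → F := ![0, 0, d, 0]

/-- The data `(Γ, J, δ)` of the paper: `δ₃ ∈ F \ {0}`, `Γ ≤ F⁴` an additive subgroup
containing `σ = (1,0,1,0)` and `δ = (0,0,δ₃,0)`, with `ker π₄ ⊄ ker π₂` whenever `π₂ ≠ 0`,
and `J_p` encoded by `m p : Bool` (`J_p = ℕ` iff `m p = true`), with `J_q ≠ {0}`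
whenever `π_q = 0`, for `q = 2,4`.  (Coordinates `1,2,3,4` are `Fin 4` indices `0,1,2,3`.) -/
structure Datum where
  d3 : F
  d3_ne : d3 ≠ 0
  Γ : AddSubgroup (Fin 4 → F)
  m : Fin 4 → Bool
  sigma_mem : sigmaV F ∈ Γ
  delta_mem : deltaV F d3 ∈ Γ
  ker_cond : (∃ α ∈ Γ, α 1 ≠ 0) → ∃ α ∈ Γ, α 3 = 0 ∧ α 1 ≠ 0
  J2_cond : (∀ α ∈ Γ, α 1 = 0) → m 1 = true
  J4_cond : (∀ α ∈ Γ, α 3 = 0) → m 3 = true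

variable {F}

/-- The monoid `J = J₁ × J₂ × J₃ × J₄ ⊆ ℕ⁴`, where `J_p = ℕ` if `m p = true` and
`J_p = {0}` otherwise. -/
def Jmon (m : Fin 4 → Bool) : AddSubmonoid (Fin 4 → ℕ) where
  carrier := {i | ∀ p, m p = false → i p = 0}
  zero_mem' := fun p _ => rfl
  add_mem' := fun ha hb p hp => by
    simp only [Set.mem_setOf_eq] at ha hb
    simp [Pi.add_apply, ha p hp, hb p hp]

/-- The commutative associative algebra `A = A(Γ,J)`, the semigroup algebra of `Γ × J`
with basis `x^{α,i}`, `(α,i) ∈ Γ × J`. -/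
abbrev Alg (D : Datum F) : Type _ := AddMonoidAlgebra F (↥D.Γ × ↥(Jmon D.m))

/-- The basis element `x^{α,i}`. -/
noncomputable def X (D : Datum F) (g : ↥D.Γ × ↥(Jmon D.m)) : Alg D :=
  AddMonoidAlgebra.single g 1

/-- `i - 1_[p]` (truncated subtraction). -/
def subE {m : Fin 4 → Bool} (i : ↥(Jmon m)) (p : Fin 4) : ↥(Jmon m) :=
  ⟨i.1 - Pi.single p 1, fun q hq => by
    have h : i.1 q = 0 := i.2 q hq
    simp only [Pi.sub_apply, h, Nat.zero_sub]⟩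

/-- `∂_p x^{α,i} = α_p x^{α,i} + i_p x^{α,i-1_[p]}` (coordinates are `Fin 4` indexed). -/
noncomputable def Dmon (D : Datum F) (p : Fin 4) (g : ↥D.Γ × ↥(Jmon D.m)) : Alg D :=
  (g.1.1 p) • X D g + ((g.2.1 p : F)) • X D (g.1, subE g.2 p)

/-- The derivation `∂_p` of `A`, extended linearly from its values on the basis. -/
noncomputable def Dop (D : Datum F) (p : Fin 4) (u : Alg D) : Alg D :=
  Finsupp.sum u.coeff fun g c => c • Dmon D p g

/-- The Lie bracket (1.6):
`[u,v] = x^{σ,0}(∂₁(u)∂₂(v) − ∂₁(v)∂₂(u)) + (x^{δ,0}∂₃(u) + u)∂₄(v) − ∂₄(u)(x^{δ,0}∂₃(v) + v)`. -/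
noncomputable def br (D : Datum F) (u v : Alg D) : Alg D :=
  X D (⟨sigmaV F, D.sigma_mem⟩, 0) * (Dop D 0 u * Dop D 1 v - Dop D 0 v * Dop D 1 u)
    + (X D (⟨deltaV F D.d3, D.delta_mem⟩, 0) * Dop D 2 u + u) * Dop D 3 v
    - Dop D 3 u * (X D (⟨deltaV F D.d3, D.delta_mem⟩, 0) * Dop D 2 v + v)

/-- The derived subalgebra `B = [A,A]`, the span of all brackets. -/
noncomputable def Bspan (D : Datum F) : Submodule F (Alg D) :=
  Submodule.span F {w | ∃ u v : Alg D, w = br D u v}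

/-! Both `iσ` and `jδ` are elements `γ ∈ Γ` with `γ₂ = γ₄ = 0` and `γ₁ ≠ 1`, and every such `x^γ`
is a bracket up to a scalar. If `π₂ ≠ 0`, pick `a ∈ Γ` with `a₄ = 0 ≠ a₂`; then
`[x^a, x^{γ-σ-a}] = -a₂(γ₁ - 1) x^γ`. If `π₂ = 0`, then `J₂ = ℕ` and `[x^σ, x^{γ-2σ, 1_[2]}] = x^γ`. -/

section Coordinates

variable (F)

@[simp] lemma sigmaV_zero : sigmaV F 0 = 1 := rfl
@[simp] lemma sigmaV_one : sigmaV F 1 = 0 := rfl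
@[simp] lemma sigmaV_three : sigmaV F 3 = 0 := rfl

@[simp] lemma deltaV_zero (d : F) : deltaV F d 0 = 0 := rfl
@[simp] lemma deltaV_one (d : F) : deltaV F d 1 = 0 := rfl
@[simp] lemma deltaV_three (d : F) : deltaV F d 3 = 0 := rfl

end Coordinates

namespace Datum

variable (D : Datum F)

def sigma : D.Γ := ⟨sigmaV F, D.sigma_mem⟩

def delta : D.Γ := ⟨deltaV F D.d3, D.delta_mem⟩

@[simp]
lemma coe_sigma : (D.sigma : Fin 4 → F) = sigmaV F := rfl

end Datum

section Bracket

variable (D : Datum F)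

lemma br_def (u v : Alg D) :
    br D u v = X D (D.sigma, 0) * (Dop D 0 u * Dop D 1 v - Dop D 0 v * Dop D 1 u)
      + (X D (D.delta, 0) * Dop D 2 u + u) * Dop D 3 v
      - Dop D 3 u * (X D (D.delta, 0) * Dop D 2 v + v) :=
  rfl

lemma br_mem_Bspan (u v : Alg D) : br D u v ∈ Bspan D :=
  Submodule.subset_span ⟨u, v, rfl⟩

lemma X_mul_X (g h : D.Γ × Jmon D.m) : X D g * X D h = X D (g + h) := by
  simp [X, AddMonoidAlgebra.single_mul_single]

lemma Dop_X (p : Fin 4) (g : D.Γ × Jmon D.m) :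
    Dop D p (X D g) = g.1.1 p • X D g + (g.2.1 p : F) • X D (g.1, subE g.2 p) := by
  rw [Dop, X, AddMonoidAlgebra.coeff_single, Finsupp.sum_single_index (zero_smul F (Dmon D p g)),
    one_smul]
  rfl

lemma Dop_X_zero (p : Fin 4) (g : D.Γ) : Dop D p (X D (g, 0)) = g.1 p • X D (g, 0) := by
  simp [Dop_X]

lemma br_X_zero_X_zero (g h : D.Γ) :
    br D (X D (g, 0)) (X D (h, 0)) =
      (g.1 0 * h.1 1 - g.1 1 * h.1 0) • X D (D.sigma + g + h, 0)
      + (g.1 2 * h.1 3 - g.1 3 * h.1 2) • X D (D.delta + g + h, 0)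
      + (h.1 3 - g.1 3) • X D (g + h, 0) := by
  simp only [br_def, Dop_X_zero, smul_mul_assoc, mul_smul_comm, X_mul_X, Prod.mk_add_mk, add_zero,
    mul_sub, mul_add, add_mul]
  rw [add_comm h g, add_left_comm g D.delta h, ← add_assoc, ← add_assoc]
  module

end Bracket

def Jmon.single {m : Fin 4 → Bool} (p : Fin 4) (hp : m p = true) : Jmon m :=
  ⟨Pi.single p 1, fun q hq => Pi.single_eq_of_ne (by rintro rfl; simp [hp] at hq) 1⟩

@[simp]
lemma subE_single_self {m : Fin 4 → Bool} (p : Fin 4) (hp : m p = true) :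
    subE (Jmon.single p hp) p = 0 := by
  ext q
  simp [subE, Jmon.single]

lemma br_X_sigma_X_single (D : Datum F) (hm : D.m 1 = true) (h : D.Γ)
    (h1 : h.1 1 = 0) (h3 : h.1 3 = 0) :
    br D (X D (D.sigma, 0)) (X D (h, Jmon.single 1 hm)) = X D (D.sigma + D.sigma + h, 0) := by
  have hsingle : ∀ p, ((Jmon.single 1 hm).1 p : F) = if p = 1 then 1 else 0 := by
    intro p; by_cases hp : p = 1 <;> simp [Jmon.single, hp]
  simp only [br_def, Dop_X, subE_single_self, hsingle, h1, h3, Datum.coe_sigma]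
  simp [X_mul_X, add_assoc]

variable {D : Datum F}

lemma X_mem_Bspan_of_ker_witness {a : D.Γ} (ha3 : a.1 3 = 0) (ha1 : a.1 1 ≠ 0) {γ : D.Γ}
    (hγ0 : γ.1 0 ≠ 1) (hγ1 : γ.1 1 = 0) (hγ3 : γ.1 3 = 0) : X D (γ, 0) ∈ Bspan D := by
  have hbr :
      br D (X D (a, 0)) (X D (γ - D.sigma - a, 0)) = -(a.1 1 * (γ.1 0 - 1)) • X D (γ, 0) := by
    have hsum : D.sigma + a + (γ - D.sigma - a) = γ := by abel
    rw [br_X_zero_X_zero, hsum]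
    simp only [AddSubgroupClass.coe_sub, Datum.coe_sigma, Pi.sub_apply, sigmaV_zero, sigmaV_one,
      sigmaV_three, ha3, hγ1, hγ3, sub_self, mul_zero, zero_mul, zero_smul, add_zero]
    module
  have hc : -(a.1 1 * (γ.1 0 - 1)) ≠ 0 := neg_ne_zero.mpr (mul_ne_zero ha1 (sub_ne_zero.mpr hγ0))
  exact (Submodule.smul_mem_iff _ hc).mp (hbr ▸ br_mem_Bspan D _ _)

lemma X_mem_Bspan_of_m_one (hm : D.m 1 = true) {γ : D.Γ} (hγ1 : γ.1 1 = 0) (hγ3 : γ.1 3 = 0) :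
    X D (γ, 0) ∈ Bspan D := by
  have hbr := br_X_sigma_X_single D hm (γ - D.sigma - D.sigma) (by simp [hγ1]) (by simp [hγ3])
  rw [show D.sigma + D.sigma + (γ - D.sigma - D.sigma) = γ by abel] at hbr
  exact hbr ▸ br_mem_Bspan D _ _

lemma X_mem_Bspan {γ : D.Γ} (hγ0 : γ.1 0 ≠ 1) (hγ1 : γ.1 1 = 0) (hγ3 : γ.1 3 = 0) :
    X D (γ, 0) ∈ Bspan D := by
  by_cases hm : D.m 1 = true
  · exact X_mem_Bspan_of_m_one hm hγ1 hγ3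
  · obtain ⟨a, haΓ, ha3, ha1⟩ := D.ker_cond (by contrapose! hm; exact D.J2_cond hm)
    exact X_mem_Bspan_of_ker_witness (a := ⟨a, haΓ⟩) ha3 ha1 hγ0 hγ1 hγ3

/-- for all integers `i ≠ 1` and all integers `j`, the elements
`x^{iσ,0}` and `x^{jδ,0}` lie in `B = [A,A]`. -/
theorem xsigma_xdelta_mem_derived (F : Type*) [Field F] [CharZero F] (D : Datum F)
    (i j : ℤ) (hi : i ≠ 1) :
    X D (⟨i • sigmaV F, AddSubgroup.zsmul_mem D.Γ D.sigma_mem i⟩, 0) ∈ Bspan D ∧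
    X D (⟨j • deltaV F D.d3, AddSubgroup.zsmul_mem D.Γ D.delta_mem j⟩, 0) ∈ Bspan D := by
  have hi' : (i : F) ≠ 1 := by exact_mod_cast hi
  constructor
  · exact X_mem_Bspan (by simpa using hi') (by simp) (by simp)
  · exact X_mem_Bspan (by simp) (by simp) (by simp)

end SuBlock
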